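/- arXiv:1907.01335 — 3 statements merged into one kernel-verified Lean document; each statement's English description precedes it below -/
import Mathlib

section
/- For an odd prime t and integers d, d', the rank-2 lattices Λ_{t,d} and Λ_{t,d'} with Gram matrices [[2d, t],[t, 0]] and [[2d', t],[t, 0]] are isomorphic if and only if d ≡ d' (mod t) or d·d' ≡ 1 (mod t). -/
open Matrix

/-- Two Gram matrices define isomorphic lattices iff some change of basis in GL₂(ℤ)
transforms one into the other. -/
def LatticeIso (G₁ G₂ : Matrix (Fin 2) (Fin 2) ℤ) : Prop :=
  ∃ M : Matrix (Fin 2) (Fin 2) ℤ, IsUnit M.det ∧ Mᵀ * G₁ * M = G₂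

/-!
A change of basis `!![a, b; c, e]` taking `!![2d, t; t, 0]` to `!![2d', t; t, 0]` satisfies
`d' = da² + tac`, `2dab + t(ae + bc) = t` and `b(db + te) = 0`. If `b = 0` then `a = ±1`, so
`d' ≡ d`. Otherwise `db + te = 0` turns the middle equation into `b(da + tc) = t`, and as `t` is
prime either `b = ±1`, so that `t` divides `d` and `d'`, or `da + tc = ±1`, and then
`dd' = (da + tc)·da ≡ (da + tc)² = 1 (mod t)`. Conversely `!![1, 0; k, 1]` realises
`d' = d + tk`, and `!![d', t; m, -d]` realises `dd' = 1 + tm`.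
-/

theorem transpose_mul_gram_mul {R : Type*} [CommRing R] (d t a b c e : R) :
    !![a, b; c, e]ᵀ * !![2 * d, t; t, 0] * !![a, b; c, e] =
      !![2 * (d * a ^ 2 + t * a * c), 2 * d * a * b + t * (a * e + b * c);
        2 * d * a * b + t * (a * e + b * c), 2 * (b * (d * b + t * e))] := by
  ext i j
  fin_cases i <;> fin_cases j <;> simp [mul_apply, Fin.sum_univ_two] <;> ring

section

variable {t d d' a c : ℤ}

theorem modEq_of_isUnit (hd' : d * a ^ 2 + t * a * c = d') (ha : IsUnit a) :
    d ≡ d' [ZMOD t] :=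
  Int.modEq_iff_dvd.mpr ⟨a * c, by linear_combination d * Int.isUnit_sq ha - hd'⟩

theorem modEq_of_dvd (hd' : d * a ^ 2 + t * a * c = d') (htd : t ∣ d) : d ≡ d' [ZMOD t] :=
  have htd' : t ∣ d' := hd' ▸ dvd_add (dvd_mul_of_dvd_left htd _) (by simp [mul_assoc])
  (Int.modEq_zero_iff_dvd.mpr htd).trans (Int.modEq_zero_iff_dvd.mpr htd').symm

theorem mul_modEq_one_of_isUnit (hd' : d * a ^ 2 + t * a * c = d') (hu : IsUnit (d * a + t * c)) :
    d * d' ≡ 1 [ZMOD t] :=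
  calc d * d' = (d * a + t * c) * (d * a) := by rw [← hd']; ring
    _ ≡ (d * a + t * c) * (d * a + t * c) [ZMOD t] :=
      Int.ModEq.mul_left _ (Int.modEq_iff_dvd.mpr ⟨c, by ring⟩)
    _ = 1 := Int.isUnit_mul_self hu

end

theorem modEq_or_mul_modEq_one_of_latticeIso {t d d' : ℤ} (ht : Prime t)
    (h : LatticeIso !![2 * d, t; t, 0] !![2 * d', t; t, 0]) :
    d ≡ d' [ZMOD t] ∨ d * d' ≡ 1 [ZMOD t] := by
  obtain ⟨M, -, hM⟩ := h
  obtain ⟨a, b, c, e, rfl⟩ : ∃ a b c e, M = !![a, b; c, e] := ⟨_, _, _, _, eta_fin_two M⟩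
  rw [transpose_mul_gram_mul] at hM
  have hd' : d * a ^ 2 + t * a * c = d' := by simpa using congrArg (· 0 0) hM
  have hab : 2 * d * a * b + t * (a * e + b * c) = t := by simpa using congrArg (· 0 1) hM
  have hb : b * (d * b + t * e) = 0 := by simpa using congrArg (· 1 1) hM
  rcases mul_eq_zero.mp hb with rfl | hdb
  · refine .inl (modEq_of_isUnit hd' (.of_mul_eq_one e (mul_left_cancel₀ ht.ne_zero ?_)))
    linear_combination hab
  · have hfac : b * (d * a + t * c) = t := by linear_combination hab - a * hdb
    rcases ht.irreducible.isUnit_or_isUnit hfac.symm with hbu | hu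
    · refine .inl (modEq_of_dvd hd' (hbu.dvd_mul_right.mp ⟨-e, ?_⟩))
      linear_combination hdb
    · exact .inr (mul_modEq_one_of_isUnit hd' hu)

theorem latticeIso_of_modEq {t d d' : ℤ} (h : d ≡ d' [ZMOD t]) :
    LatticeIso !![2 * d, t; t, 0] !![2 * d', t; t, 0] := by
  obtain ⟨k, hk⟩ := Int.modEq_iff_dvd.mp h
  refine ⟨!![1, 0; k, 1], by simp [det_fin_two_of], ?_⟩
  rw [transpose_mul_gram_mul]
  simp only [EmbeddingLike.apply_eq_iff_eq, vecCons_inj, and_true]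
  exact ⟨⟨by linear_combination -2 * hk, by ring⟩, by ring, by ring⟩

theorem latticeIso_of_mul_modEq_one {t d d' : ℤ} (h : d * d' ≡ 1 [ZMOD t]) :
    LatticeIso !![2 * d, t; t, 0] !![2 * d', t; t, 0] := by
  obtain ⟨m, hm⟩ := Int.modEq_iff_dvd.mp h
  refine ⟨!![d', t; m, -d], ?_, ?_⟩
  · have hdet : (!![d', t; m, -d]).det = -1 := by rw [det_fin_two_of]; linear_combination hm
    exact hdet ▸ isUnit_one.neg
  · rw [transpose_mul_gram_mul]
    simp only [EmbeddingLike.apply_eq_iff_eq, vecCons_inj, and_true]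
    have hoff : 2 * d * d' * t + t * (d' * -d + t * m) = t := by linear_combination -t * hm
    exact ⟨⟨by linear_combination -2 * d' * hm, hoff⟩, hoff, by ring⟩

theorem stmt_7_general (t : ℕ) (ht : t.Prime) (d d' : ℤ) :
    LatticeIso !![2 * d, (t : ℤ); (t : ℤ), 0] !![2 * d', (t : ℤ); (t : ℤ), 0] ↔
      (d ≡ d' [ZMOD (t : ℤ)] ∨ d * d' ≡ 1 [ZMOD (t : ℤ)]) :=
  ⟨modEq_or_mul_modEq_one_of_latticeIso (Nat.prime_iff_prime_int.mp ht),
    fun h => h.elim latticeIso_of_modEq latticeIso_of_mul_modEq_one⟩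

/-- For an odd prime t, the lattices Λ_{t,d} and Λ_{t,d'} with Gram matrices
[[2d, t],[t, 0]] and [[2d', t],[t, 0]] are isomorphic iff d ≡ d' (mod t) or
d·d' ≡ 1 (mod t). -/
theorem stmt_7 (t : ℕ) (ht : t.Prime) (hodd : Odd t) (d d' : ℤ) :
    LatticeIso !![2 * d, (t : ℤ); (t : ℤ), 0] !![2 * d', (t : ℤ); (t : ℤ), 0] ↔
      (d ≡ d' [ZMOD (t : ℤ)] ∨ d * d' ≡ 1 [ZMOD (t : ℤ)]) :=
  stmt_7_general t ht d d'
end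

section
/- Let t be an odd prime and d an integer coprime to t. Then the discriminant group Λ_{t,d}*/Λ_{t,d} of the lattice with Gram matrix [[2d, t],[t, 0]] is cyclic of order t². -/
/-!
For `x` in the dual lattice of `[[a, t], [t, 0]]` the pairings `p = B(x, e₁) = t x₀` and
`q = B(x, e₀) = a x₀ + t x₁` are integers, hence so is `t² x₁ = t q - a p`; reducing it modulo
`t²` gives a homomorphism `Λ* → ℤ/t²`. If `a` is prime to `t`, its kernel is `Λ`: from
`t² ∣ t q - a p` we get `t ∣ p`, so `x₀ ∈ ℤ`, and then `x₁ ∈ ℤ`. It is onto, since the dual vector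
`(1/t, -a/t²)` maps to the unit `-a`. For `a = 2d` and odd `t`, this gives `Λ*/Λ ≅ ℤ/t²`.
-/

/-- The standard lattice ℤ² inside ℚ². -/
def latticeZ : Submodule ℤ (Fin 2 → ℚ) :=
  Submodule.span ℤ (Set.range fun i => (Pi.single i 1 : Fin 2 → ℚ))

/-- The bilinear form on ℚ² = Λ ⊗ ℚ with (integral) Gram matrix G. -/
noncomputable def formQ (G : Matrix (Fin 2) (Fin 2) ℤ) :
    (Fin 2 → ℚ) →ₗ[ℚ] (Fin 2 → ℚ) →ₗ[ℚ] ℚ :=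
  Matrix.toBilin' (G.map ((↑) : ℤ → ℚ))

/-- The dual lattice Λ* = {x ∈ Λ⊗ℚ : B(x, Λ) ⊆ ℤ}. -/
noncomputable def dualLattice (G : Matrix (Fin 2) (Fin 2) ℤ) : Submodule ℤ (Fin 2 → ℚ) :=
  ⨅ y ∈ latticeZ, Submodule.comap (((formQ G).flip y).restrictScalars ℤ)
    (LinearMap.range (Algebra.linearMap ℤ ℚ))

/-- The discriminant group Λ*/Λ. -/
noncomputable abbrev discGroup (G : Matrix (Fin 2) (Fin 2) ℤ) :=
  dualLattice G ⧸ (latticeZ.comap (dualLattice G).subtype)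

theorem mem_latticeZ_iff {x : Fin 2 → ℚ} : x ∈ latticeZ ↔ ∀ i, x i ∈ Set.range ((↑) : ℤ → ℚ) := by
  have hb : ⇑(Pi.basisFun ℚ (Fin 2)) = fun i => Pi.single i 1 := funext (Pi.basisFun_apply ℚ _)
  rw [latticeZ, ← hb]
  simpa using (Pi.basisFun ℚ (Fin 2)).mem_span_iff_repr_mem ℤ x

theorem mem_dualLattice_iff {G : Matrix (Fin 2) (Fin 2) ℤ} {x : Fin 2 → ℚ} :
    x ∈ dualLattice G ↔ ∀ j, formQ G x (Pi.single j 1) ∈ Set.range ((↑) : ℤ → ℚ) := by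
  have : x ∈ dualLattice G ↔
      latticeZ ≤ (LinearMap.range (Algebra.linearMap ℤ ℚ)).comap ((formQ G x).restrictScalars ℤ) := by
    simp [dualLattice, SetLike.le_def]
  rw [this, latticeZ, Submodule.span_le, Set.range_subset_iff]
  rfl

noncomputable def dualPairing (G : Matrix (Fin 2) (Fin 2) ℤ) (j : Fin 2) : dualLattice G →ₗ[ℤ] ℤ :=
  (LinearEquiv.ofInjective (Algebra.linearMap ℤ ℚ) Int.cast_injective).symm ∘ₗ
    (((formQ G).flip (Pi.single j 1)).restrictScalars ℤ ∘ₗ (dualLattice G).subtype).codRestrict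
      (LinearMap.range (Algebra.linearMap ℤ ℚ)) fun x => mem_dualLattice_iff.mp x.2 j

theorem dualPairing_apply (G : Matrix (Fin 2) (Fin 2) ℤ) (j : Fin 2) (x : dualLattice G) :
    (dualPairing G j x : ℚ) = formQ G x (Pi.single j 1) :=
  LinearEquiv.ofInjective_symm_apply (h := Int.cast_injective) (Algebra.linearMap ℤ ℚ) _

section Hyperbolic

variable {a : ℤ} {t : ℕ}

theorem formQ_single_zero (x : Fin 2 → ℚ) :
    formQ !![a, (t : ℤ); (t : ℤ), 0] x (Pi.single 0 1) = a * x 0 + t * x 1 := by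
  simp [formQ, Matrix.toBilin'_apply, Fin.sum_univ_two, mul_comm]

theorem formQ_single_one (x : Fin 2 → ℚ) :
    formQ !![a, (t : ℤ); (t : ℤ), 0] x (Pi.single 1 1) = t * x 0 := by
  simp [formQ, Matrix.toBilin'_apply, Fin.sum_univ_two, mul_comm]

variable (a t) in
noncomputable def scaledSecondCoord : dualLattice !![a, (t : ℤ); (t : ℤ), 0] →ₗ[ℤ] ℤ :=
  (t : ℤ) • dualPairing _ 0 - a • dualPairing _ 1

theorem scaledSecondCoord_apply (x : dualLattice !![a, (t : ℤ); (t : ℤ), 0]) :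
    (scaledSecondCoord a t x : ℚ) = t ^ 2 * (x : Fin 2 → ℚ) 1 := by
  simp only [scaledSecondCoord, LinearMap.sub_apply, LinearMap.smul_apply, smul_eq_mul,
    Int.cast_sub, Int.cast_mul, Int.cast_natCast, dualPairing_apply, formQ_single_zero,
    formQ_single_one]
  ring

theorem mem_latticeZ_iff_dvd_scaledSecondCoord (ht : t ≠ 0) (hat : IsCoprime a t)
    (x : dualLattice !![a, (t : ℤ); (t : ℤ), 0]) :
    (x : Fin 2 → ℚ) ∈ latticeZ ↔ (t : ℤ) ^ 2 ∣ scaledSecondCoord a t x := by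
  have htQ : (t : ℚ) ≠ 0 := by exact_mod_cast ht
  have hF := scaledSecondCoord_apply x
  rw [mem_latticeZ_iff, Fin.forall_fin_two]
  constructor
  · rintro ⟨-, m, hm⟩
    refine ⟨m, ?_⟩
    rw [← hm] at hF
    exact_mod_cast hF
  · rintro ⟨k, hk⟩
    have hp := dualPairing_apply _ 1 x
    rw [formQ_single_one] at hp
    have htp : (t : ℤ) ∣ dualPairing _ 1 x * a := by
      have hF' : dualPairing _ 1 x * a = t * dualPairing _ 0 x - scaledSecondCoord a t x := by
        simp only [scaledSecondCoord, LinearMap.sub_apply, LinearMap.smul_apply, smul_eq_mul]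
        ring
      rw [hF', hk]
      exact dvd_sub (dvd_mul_right _ _) (dvd_mul_of_dvd_left (dvd_pow_self _ two_ne_zero) _)
    obtain ⟨m, hm⟩ := hat.symm.dvd_of_dvd_mul_right htp
    refine ⟨⟨m, ?_⟩, ⟨k, ?_⟩⟩
    · rw [hm] at hp
      push_cast at hp
      exact mul_left_cancel₀ htQ hp
    · rw [hk] at hF
      push_cast at hF
      exact mul_left_cancel₀ (pow_ne_zero 2 htQ) hF

variable (a t) in
noncomputable def discMap : dualLattice !![a, (t : ℤ); (t : ℤ), 0] →ₗ[ℤ] ZMod (t ^ 2) :=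
  (Int.castAddHom (ZMod (t ^ 2))).toIntLinearMap ∘ₗ scaledSecondCoord a t

theorem ker_discMap (ht : t ≠ 0) (hat : IsCoprime a t) :
    LinearMap.ker (discMap a t) = latticeZ.comap (dualLattice _).subtype := by
  ext x
  rw [LinearMap.mem_ker, Submodule.mem_comap, Submodule.subtype_apply,
    mem_latticeZ_iff_dvd_scaledSecondCoord ht hat]
  simp [discMap, ZMod.intCast_zmod_eq_zero_iff_dvd]

theorem discMap_surjective (ht : t ≠ 0) (hat : IsCoprime a t) :
    Function.Surjective (discMap a t) := by
  have htQ : (t : ℚ) ≠ 0 := by exact_mod_cast ht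
  have hv : (![1 / t, -a / t ^ 2] : Fin 2 → ℚ) ∈ dualLattice !![a, (t : ℤ); (t : ℤ), 0] := by
    rw [mem_dualLattice_iff, Fin.forall_fin_two, formQ_single_zero, formQ_single_one]
    refine ⟨⟨0, ?_⟩, ⟨1, ?_⟩⟩
    · simp only [Matrix.cons_val_zero, Matrix.cons_val_one, Int.cast_zero]
      field_simp
      ring
    · simp only [Matrix.cons_val_zero, Int.cast_one]
      field_simp
  have hFv : discMap a t ⟨_, hv⟩ = -a := by
    have h : (scaledSecondCoord a t ⟨_, hv⟩ : ℚ) = t ^ 2 * (-a / t ^ 2) :=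
      scaledSecondCoord_apply ⟨_, hv⟩
    rw [mul_div_cancel₀ _ (pow_ne_zero 2 htQ)] at h
    change ((scaledSecondCoord a t ⟨_, hv⟩ : ℤ) : ZMod (t ^ 2)) = -a
    rw [show scaledSecondCoord a t ⟨_, hv⟩ = -a by exact_mod_cast h, Int.cast_neg]
  have hunit : (a : ZMod (t ^ 2))⁻¹ * a = 1 :=
    ZMod.coe_int_inv_mul_eq_one (by push_cast; exact hat.pow_right)
  intro z
  refine ⟨-(z * (a : ZMod (t ^ 2))⁻¹).cast • ⟨_, hv⟩, ?_⟩
  rw [map_zsmul, hFv, zsmul_eq_mul, Int.cast_neg, ZMod.intCast_zmod_cast, neg_mul_neg, mul_assoc,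
    hunit, mul_one]

variable (a t) in
noncomputable def discGroupEquivZMod (ht : t ≠ 0) (hat : IsCoprime a t) :
    discGroup !![a, (t : ℤ); (t : ℤ), 0] ≃ₗ[ℤ] ZMod (t ^ 2) :=
  (Submodule.quotEquivOfEq _ _ (ker_discMap ht hat).symm).trans
    ((discMap a t).quotKerEquivOfSurjective (discMap_surjective ht hat))

end Hyperbolic

theorem stmt_9_general (t : ℕ) (hodd : Odd t) (d : ℤ) (hcop : IsCoprime d (t : ℤ)) :
    IsAddCyclic (discGroup !![2 * d, (t : ℤ); (t : ℤ), 0]) ∧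
      Nat.card (discGroup !![2 * d, (t : ℤ); (t : ℤ), 0]) = t ^ 2 := by
  have h2d : IsCoprime (2 * d) (t : ℤ) :=
    (Nat.isCoprime_iff_coprime.mpr hodd.coprime_two_left).mul_left hcop
  let e := discGroupEquivZMod (2 * d) t hodd.pos.ne' h2d
  exact ⟨isAddCyclic_of_surjective e.symm.toAddMonoidHom e.symm.surjective,
    (Nat.card_congr e.toEquiv).trans (Nat.card_zmod _)⟩

/-- For an odd prime t and d coprime to t, the discriminant group of the lattice
Λ_{t,d} with Gram matrix [[2d, t],[t, 0]] is cyclic of order t². -/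
theorem stmt_9 (t : ℕ) (ht : t.Prime) (hodd : Odd t) (d : ℤ) (hcop : IsCoprime d (t : ℤ)) :
    IsAddCyclic (discGroup !![2 * d, (t : ℤ); (t : ℤ), 0]) ∧
      Nat.card (discGroup !![2 * d, (t : ℤ); (t : ℤ), 0]) = t ^ 2 :=
  stmt_9_general t hodd d hcop
end

section
/- The lattices Λ_{5,1} and Λ_{5,4}, given by Gram matrices [[2, 5],[5, 0]] and [[8, 5],[5, 0]], are not isomorphic over Z, although they have the same determinant −25, the same signature (1,1), and isomorphic discriminant groups Z/25. -/
/-!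
Both Gram matrices `!![a, n; n, 0]` have determinant `-n²`, and the form takes the values `n²`
and `-n²`, hence is indefinite. Their discriminant groups are cyclic of order `n²` as soon as
`a` is a unit mod `n`. The lattices are still not isomorphic: a unimodular change of basis
preserves the set of values of the form, `Λ_{5,1}` represents `2` at `e₁`, and
`8x² + 10xy = 2x(4x + 5y) = 2` would force `x = ±1` and then `5y = -3x`.
-/

open Matrix

theorem dotProduct_mulVec_of_transpose_mul_mul_eq {n R : Type*} [Fintype n] [CommRing R]
    {A B M : Matrix n n R} (h : Mᵀ * A * M = B) (w : n → R) :
    (M *ᵥ w) ⬝ᵥ A *ᵥ (M *ᵥ w) = w ⬝ᵥ B *ᵥ w := by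
  rw [← h, ← mulVec_mulVec, ← mulVec_mulVec, dotProduct_mulVec w, vecMul_transpose]

theorem exists_dotProduct_mulVec_eq_of_transpose_mul_mul_eq {n R : Type*} [Fintype n]
    [DecidableEq n] [CommRing R] {A B M : Matrix n n R} (hM : IsUnit M.det)
    (h : Mᵀ * A * M = B) (v : n → R) : ∃ w, w ⬝ᵥ B *ᵥ w = v ⬝ᵥ A *ᵥ v :=
  ⟨M⁻¹ *ᵥ v, by
    rw [← dotProduct_mulVec_of_transpose_mul_mul_eq h, mulVec_mulVec, mul_nonsing_inv _ hM,
      one_mulVec]⟩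

theorem exists_dotProduct_mulVec_pos_and_neg {K : Type*} [Field K] [LinearOrder K]
    [IsStrictOrderedRing K] (a : K) {n : K} (hn : n ≠ 0) :
    ∃ x y : Fin 2 → K, 0 < x ⬝ᵥ !![a, n; n, 0] *ᵥ x ∧ y ⬝ᵥ !![a, n; n, 0] *ᵥ y < 0 := by
  refine ⟨![n, (1 - a) / 2], ![n, (-1 - a) / 2], ?_, ?_⟩
  · have : ![n, (1 - a) / 2] ⬝ᵥ !![a, n; n, 0] *ᵥ ![n, (1 - a) / 2] = n ^ 2 := by
      simp [dotProduct, Fin.sum_univ_two]; ring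
    rw [this]; positivity
  · have : ![n, (-1 - a) / 2] ⬝ᵥ !![a, n; n, 0] *ᵥ ![n, (-1 - a) / 2] = -n ^ 2 := by
      simp [dotProduct, Fin.sum_univ_two]; ring
    rw [this, neg_lt_zero]; positivity

/-- With `c = n k`, `m = n²` and `a k ≡ -1 mod n`, the kernel is the image of `!![a, n; n, 0]`. -/
def gramCokerMap (m : ℕ) (c : ℤ) : (Fin 2 → ℤ) →ₗ[ℤ] ZMod m :=
  (Int.castAddHom (ZMod m)).toIntLinearMap ∘ₗ (c • LinearMap.proj 0 + LinearMap.proj 1)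

@[simp]
theorem gramCokerMap_apply (m : ℕ) (c : ℤ) (v : Fin 2 → ℤ) :
    gramCokerMap m c v = ((c * v 0 + v 1 : ℤ) : ZMod m) := by
  simp [gramCokerMap]

theorem range_toLin'_eq_ker_gramCokerMap {a n k : ℤ} {m : ℕ} (hm : (m : ℤ) = n ^ 2)
    (hk : n ∣ a * k + 1) :
    LinearMap.range (toLin' !![a, n; n, 0]) = LinearMap.ker (gramCokerMap m (n * k)) := by
  obtain ⟨c, hc⟩ := hk
  ext v
  simp only [LinearMap.mem_range, LinearMap.mem_ker, toLin'_apply, gramCokerMap_apply,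
    ZMod.intCast_zmod_eq_zero_iff_dvd, hm]
  constructor
  · rintro ⟨w, rfl⟩
    refine ⟨c * w 0 + k * w 1, ?_⟩
    simp [vecHead, vecTail]
    linear_combination n * w 0 * hc
  · rintro ⟨t, ht⟩
    refine ⟨![n * t - k * v 0, c * v 0 - a * t], funext fun i => ?_⟩
    fin_cases i
    · simp
      linear_combination -v 0 * hc
    · simp
      linear_combination -ht

theorem gramCokerMap_surjective (m : ℕ) (c : ℤ) : Function.Surjective (gramCokerMap m c) := by
  intro z
  obtain ⟨k, rfl⟩ := ZMod.intCast_surjective z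
  exact ⟨![0, k], by simp⟩

theorem nonempty_coker_addEquiv_zmod {a n k : ℤ} {m : ℕ} (hm : (m : ℤ) = n ^ 2)
    (hk : n ∣ a * k + 1) :
    Nonempty (((Fin 2 → ℤ) ⧸ LinearMap.range (toLin' !![a, n; n, 0])) ≃+ ZMod m) := by
  rw [range_toLin'_eq_ker_gramCokerMap hm hk]
  exact ⟨((gramCokerMap m (n * k)).quotKerEquivOfSurjective
    (gramCokerMap_surjective _ _)).toAddEquiv⟩

theorem two_ne_dotProduct_mulVec (v : Fin 2 → ℤ) : v ⬝ᵥ !![8, 5; 5, 0] *ᵥ v ≠ 2 := by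
  intro hv
  have h : v 0 * (4 * v 0 + 5 * v 1) = 1 := by
    simp [dotProduct, Fin.sum_univ_two] at hv
    linarith
  rcases Int.eq_one_or_neg_one_of_mul_eq_one h with h0 | h0 <;> rw [h0] at h <;> omega

/-- The lattices Λ_{5,1} and Λ_{5,4} with Gram matrices G₁ = [[2,5],[5,0]] and
G₂ = [[8,5],[5,0]] both have determinant −25, both are indefinite (of signature (1,1)),
both have discriminant group (the cokernel of the Gram matrix) cyclic of order 25,
yet no M ∈ GL₂(ℤ) satisfies Mᵀ G₁ M = G₂: they are not isomorphic. -/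
theorem stmt_13 :
    (!![2, 5; 5, 0] : Matrix (Fin 2) (Fin 2) ℤ).det = -25 ∧
    (!![8, 5; 5, 0] : Matrix (Fin 2) (Fin 2) ℤ).det = -25 ∧
    (∃ x y : Fin 2 → ℚ, 0 < x ⬝ᵥ (!![2, 5; 5, 0] : Matrix (Fin 2) (Fin 2) ℚ).mulVec x ∧
      y ⬝ᵥ (!![2, 5; 5, 0] : Matrix (Fin 2) (Fin 2) ℚ).mulVec y < 0) ∧
    (∃ x y : Fin 2 → ℚ, 0 < x ⬝ᵥ (!![8, 5; 5, 0] : Matrix (Fin 2) (Fin 2) ℚ).mulVec x ∧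
      y ⬝ᵥ (!![8, 5; 5, 0] : Matrix (Fin 2) (Fin 2) ℚ).mulVec y < 0) ∧
    Nonempty (((Fin 2 → ℤ) ⧸ LinearMap.range
      (Matrix.toLin' (!![2, 5; 5, 0] : Matrix (Fin 2) (Fin 2) ℤ))) ≃+ ZMod 25) ∧
    Nonempty (((Fin 2 → ℤ) ⧸ LinearMap.range
      (Matrix.toLin' (!![8, 5; 5, 0] : Matrix (Fin 2) (Fin 2) ℤ))) ≃+ ZMod 25) ∧
    ¬ ∃ M : Matrix (Fin 2) (Fin 2) ℤ, IsUnit M.det ∧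
      Mᵀ * !![2, 5; 5, 0] * M = !![8, 5; 5, 0] := by
  refine ⟨by norm_num [det_fin_two_of], by norm_num [det_fin_two_of],
    exists_dotProduct_mulVec_pos_and_neg 2 (by norm_num),
    exists_dotProduct_mulVec_pos_and_neg 8 (by norm_num),
    nonempty_coker_addEquiv_zmod (k := 2) (by norm_num) (by norm_num),
    nonempty_coker_addEquiv_zmod (k := 3) (by norm_num) (by norm_num), ?_⟩
  rintro ⟨M, hM, hcongr⟩
  obtain ⟨w, hw⟩ := exists_dotProduct_mulVec_eq_of_transpose_mul_mul_eq hM hcongr ![1, 0]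
  exact two_ne_dotProduct_mulVec w (hw.trans rfl)
end
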